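/- For all n ≥ k ≥ 0, u(n,k) = Σ_{i=k}^{n} C(i,k) · r^{i-k} · u_r(n,i), where u(n,k) = u_0(n,k). -/

import Mathlib

/-!
The row `k ↦ u_r(n, k)` is the coefficient list of `∏_{i<n} (x - (i² + r))`: the recurrence is
exactly multiplication by `x - ((n-1)² + r)`. Shifting the variable, `∏_{i<n} (x - i²)` is that
polynomial evaluated at `x + r`, and expanding each `(x + r)^i` binomially gives the identity
coefficientwise.
-/

/-- `centralu r n k` is the r-central factorial number with even indices of the first kind. -/
def centralu (r : ℕ) : ℕ → ℕ → ℤ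
  | 0, 0 => 1
  | 0, _ + 1 => 0
  | n + 1, 0 => (-1) ^ (n + 1) * ∏ i ∈ Finset.range (n + 1), ((i : ℤ) ^ 2 + r)
  | n + 1, k + 1 => centralu r n k - ((n : ℤ) ^ 2 + r) * centralu r n (k + 1)

open Polynomial Finset

namespace Polynomial

theorem coeff_taylor_eq_sum_Icc {R : Type*} [CommSemiring R] {p : R[X]} {n : ℕ}
    (hp : p.natDegree ≤ n) (r : R) (k : ℕ) :
    (taylor r p).coeff k = ∑ i ∈ Icc k n, (i.choose k : R) * r ^ (i - k) * p.coeff i := by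
  conv_lhs => rw [p.as_sum_range' (n + 1) (by omega)]
  simp only [map_sum, taylor_monomial, finsetSum_coeff, coeff_C_mul, coeff_X_add_C_pow]
  have hsub : Icc k n ⊆ range (n + 1) := fun i hi =>
    mem_range.2 (Nat.lt_succ_of_le (mem_Icc.1 hi).2)
  rw [← sum_subset hsub fun i hi hik => ?_]
  · exact sum_congr rfl fun i _ => by ring
  · have hik : i < k := by simp only [mem_range, mem_Icc, not_and_or] at hi hik; omega
    simp [Nat.choose_eq_zero_of_lt hik]

end Polynomial

noncomputable def centralPoly (r n : ℕ) : ℤ[X] :=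
  ∏ i ∈ range n, (X - C ((i : ℤ) ^ 2 + r))

theorem natDegree_centralPoly (r n : ℕ) : (centralPoly r n).natDegree = n := by
  rw [centralPoly, natDegree_finsetProd_X_sub_C_eq_card, card_range]

theorem coeff_centralPoly (r n k : ℕ) : (centralPoly r n).coeff k = centralu r n k := by
  induction n generalizing k with
  | zero => cases k <;> simp [centralPoly, centralu, coeff_one]
  | succ n ih =>
    cases k with
    | zero =>
      simp only [centralPoly, coeff_zero_eq_eval_zero, eval_prod, eval_sub, eval_X, eval_C, zero_sub,
        prod_neg, card_range, centralu]
    | succ k =>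
      rw [centralPoly, prod_range_succ, ← centralPoly, coeff_mul_X_sub_C, ih, ih, centralu]
      ring

theorem centralPoly_zero_eq_taylor (r n : ℕ) :
    centralPoly 0 n = taylor (r : ℤ) (centralPoly r n) := by
  rw [centralPoly, centralPoly, taylor_apply, Polynomial.prod_comp]
  refine prod_congr rfl fun i _ => ?_
  simp only [sub_comp, add_comp, X_comp, C_comp, Nat.cast_zero, add_zero, C_add]
  ring

theorem centralu_zero_eq_sum_centralu (r n k : ℕ) :
    centralu 0 n k =
      ∑ i ∈ Finset.Icc k n, (i.choose k : ℤ) * (r : ℤ) ^ (i - k) * centralu r n i := by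
  rw [← coeff_centralPoly, centralPoly_zero_eq_taylor r,
    coeff_taylor_eq_sum_Icc (natDegree_centralPoly r n).le]
  simp only [coeff_centralPoly]
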